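/- arXiv:1909.00002 — 2 statements merged into one kernel-verified Lean document; each statement's English description precedes it below -/
import Mathlib

section
/- Fix q ≥ 1, real numbers x₁,…,xₙ > 0 and coefficients c₁,…,cₙ ∈ ℝ, and set ηₙ(t) = −(1/n)Σⱼ cⱼ·min{xⱼ,t} − (1/n)Σⱼ 1{xⱼ ≤ t}. Then lim_{a→∞} a^{q+1} ∫₀^∞ |ηₙ(t)|^q e^{−a t} dt = Γ(q+1)·| (1/n) Σ_{j=1}^n cⱼ |^q, where Γ is the Gamma function. -/
/-!
Near `0⁺` every `xⱼ` exceeds `t`, so `ηₙ(t) = -t·(1/n)Σⱼ cⱼ` and `|ηₙ|^q` coincides with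
`|m|^q t^q` on some `(0, δ)`. The difference is bounded by a function integrable against `e^{-t}`
and vanishes on `(0, δ)`, so its Laplace transform is `O(e^{-aδ})`, negligible against `a^{-(q+1)}`;
the main term is `|m|^q ∫ t^q e^{-at} dt = |m|^q Γ(q+1) / a^{q+1}`.
-/

open MeasureTheory Set Filter Topology Real

section LaplaceAbelian

variable {f g : ℝ → ℝ}

lemma IntegrableOn.mul_exp_neg_mul_of_one_le
    (hf : IntegrableOn (fun t => f t * exp (-t)) (Ioi 0)) {a : ℝ} (ha : 1 ≤ a) :
    IntegrableOn (fun t => f t * exp (-a * t)) (Ioi 0) := by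
  have hbdd : ∀ᵐ t ∂volume.restrict (Ioi (0 : ℝ)), ‖exp (-(a - 1) * t)‖ ≤ 1 := by
    filter_upwards [ae_restrict_mem measurableSet_Ioi] with t (ht : 0 < t)
    rw [norm_of_nonneg (exp_pos _).le, exp_le_one_iff]
    nlinarith
  refine IntegrableOn.congr_fun (hf.mul_bdd
    (by fun_prop : Continuous fun t => exp (-(a - 1) * t)).aestronglyMeasurable hbdd)
    (fun t _ => ?_) measurableSet_Ioi
  rw [mul_assoc, ← exp_add]
  ring_nf

lemma abs_integral_mul_exp_neg_mul_le (hg : IntegrableOn (fun t => g t * exp (-t)) (Ioi 0))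
    {δ : ℝ} (hδ : EqOn g 0 (Ioo 0 δ)) {a : ℝ} (ha : 1 ≤ a) :
    |∫ t in Ioi 0, g t * exp (-a * t)| ≤
      exp (-(a - 1) * δ) * ∫ t in Ioi 0, |g t * exp (-t)| := by
  rw [← integral_const_mul (exp (-(a - 1) * δ)), ← Real.norm_eq_abs]
  refine norm_integral_le_of_norm_le ((Integrable.abs hg).const_mul _) ?_
  filter_upwards [ae_restrict_mem measurableSet_Ioi] with t (ht : 0 < t)
  rcases lt_or_ge t δ with htδ | htδ
  · simp only [hδ ⟨ht, htδ⟩, Pi.zero_apply, zero_mul, norm_zero]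
    positivity
  · rw [Real.norm_eq_abs, abs_mul, abs_mul, abs_of_pos (exp_pos _), abs_of_pos (exp_pos _)]
    calc |g t| * exp (-a * t) = exp (-(a - 1) * t) * (|g t| * exp (-t)) := by
          rw [mul_left_comm, ← exp_add]
          ring_nf
      _ ≤ exp (-(a - 1) * δ) * (|g t| * exp (-t)) := by
          gcongr ?_ * _
          exact exp_le_exp.2 (by nlinarith)

lemma tendsto_rpow_mul_integral_mul_exp_neg_mul_of_eventuallyEq_zero
    (hg : IntegrableOn (fun t => g t * exp (-t)) (Ioi 0)) (hg0 : g =ᶠ[𝓝[>] 0] 0) (p : ℝ) :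
    Tendsto (fun a => a ^ p * ∫ t in Ioi 0, g t * exp (-a * t)) atTop (𝓝 0) := by
  obtain ⟨δ, hδ, hgδ⟩ := mem_nhdsGT_iff_exists_Ioo_subset.1 hg0
  set C := ∫ t in Ioi 0, |g t * exp (-t)|
  have hmajor : Tendsto (fun a => a ^ p * exp (-δ * a) * (exp δ * C)) atTop (𝓝 0) := by
    simpa using (tendsto_rpow_mul_exp_neg_mul_atTop_nhds_zero p δ hδ).mul_const (exp δ * C)
  refine squeeze_zero_norm' ?_ hmajor
  filter_upwards [eventually_ge_atTop 1] with a ha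
  rw [norm_mul, norm_of_nonneg (rpow_nonneg (by linarith) _), Real.norm_eq_abs]
  calc a ^ p * |∫ t in Ioi 0, g t * exp (-a * t)| ≤ a ^ p * (exp (-(a - 1) * δ) * C) := by
        gcongr
        exact abs_integral_mul_exp_neg_mul_le hg hgδ ha
    _ = a ^ p * exp (-δ * a) * (exp δ * C) := by
        rw [show -(a - 1) * δ = -δ * a + δ by ring, exp_add]
        ring

lemma rpow_mul_integral_rpow_mul_exp_neg_mul {q a : ℝ} (hq : -1 < q) (ha : 0 < a) :
    a ^ (q + 1) * ∫ t in Ioi 0, t ^ q * exp (-a * t) = Gamma (q + 1) := by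
  have h := integral_rpow_mul_exp_neg_mul_Ioi (a := q + 1) (by linarith) ha
  simp only [add_sub_cancel_right, ← neg_mul] at h
  rw [h, ← mul_assoc, ← mul_rpow ha.le (by positivity), mul_one_div_cancel ha.ne', one_rpow,
    one_mul]

/-- Abelian theorem for the Laplace transform: only the behaviour of `f` at `0⁺` matters. -/
theorem tendsto_rpow_mul_integral_mul_exp_neg_mul_of_eventuallyEq_rpow {q m : ℝ} (hq : -1 < q)
    (hf : IntegrableOn (fun t => f t * exp (-t)) (Ioi 0))
    (hf0 : f =ᶠ[𝓝[>] 0] fun t => m * t ^ q) :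
    Tendsto (fun a => a ^ (q + 1) * ∫ t in Ioi 0, f t * exp (-a * t)) atTop
      (𝓝 (Gamma (q + 1) * m)) := by
  have hpow : ∀ {a : ℝ}, 0 < a → IntegrableOn (fun t => m * t ^ q * exp (-a * t)) (Ioi 0) :=
    fun ha => IntegrableOn.congr_fun
      ((integrableOn_rpow_mul_exp_neg_mul_rpow hq one_pos ha).const_mul m)
      (fun t _ => by simp only [rpow_one, mul_assoc]) measurableSet_Ioi
  set g := fun t => f t - m * t ^ q
  have hg : IntegrableOn (fun t => g t * exp (-t)) (Ioi 0) := by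
    refine IntegrableOn.congr_fun (hf.sub (hpow one_pos)) (fun t _ => ?_) measurableSet_Ioi
    simp only [g, Pi.sub_apply, neg_mul, one_mul, sub_mul]
  have hg0 : g =ᶠ[𝓝[>] 0] 0 := hf0.mono fun t ht => sub_eq_zero.2 ht
  have hsplit : ∀ᶠ a in atTop, a ^ (q + 1) * (∫ t in Ioi 0, g t * exp (-a * t)) +
      Gamma (q + 1) * m = a ^ (q + 1) * ∫ t in Ioi 0, f t * exp (-a * t) := by
    filter_upwards [eventually_ge_atTop 1] with a ha
    have hpos : 0 < a := by linarith
    have h : ∫ t in Ioi 0, f t * exp (-a * t) =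
        (∫ t in Ioi 0, g t * exp (-a * t)) + m * ∫ t in Ioi 0, t ^ q * exp (-a * t) := by
      rw [← integral_const_mul, ← integral_add (IntegrableOn.mul_exp_neg_mul_of_one_le hg ha)
        ((hpow hpos).congr_fun (fun t _ => mul_assoc _ _ _) measurableSet_Ioi)]
      congr 1 with t
      ring
    rw [h, mul_add, ← rpow_mul_integral_rpow_mul_exp_neg_mul hq hpos]
    ring
  simpa using ((tendsto_rpow_mul_integral_mul_exp_neg_mul_of_eventuallyEq_zero hg hg0
    (q + 1)).add_const (Gamma (q + 1) * m)).congr' hsplit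

end LaplaceAbelian

section EmpiricalEta

variable {n : ℕ} (x c : Fin n → ℝ)

noncomputable def empiricalEta (t : ℝ) : ℝ :=
  -((n : ℝ)⁻¹ * ∑ j, c j * min (x j) t) - (n : ℝ)⁻¹ * ∑ j, (if x j ≤ t then (1 : ℝ) else 0)

lemma measurable_empiricalEta : Measurable (empiricalEta x c) := by
  unfold empiricalEta
  have hind : ∀ j, Measurable fun t : ℝ => if x j ≤ t then (1 : ℝ) else 0 := fun j =>
    Measurable.ite measurableSet_Ici measurable_const measurable_const
  fun_prop

lemma empiricalEta_eventuallyEq (hx : ∀ j, 0 < x j) :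
    empiricalEta x c =ᶠ[𝓝[>] 0] fun t => -((n : ℝ)⁻¹ * ∑ j, c j) * t := by
  have hsmall : ∀ᶠ t in 𝓝[>] (0 : ℝ), ∀ j, t < x j :=
    eventually_all.2 fun j => nhdsWithin_le_nhds (eventually_lt_nhds (hx j))
  filter_upwards [hsmall] with t ht
  simp [empiricalEta, min_eq_right (ht _).le, not_le.2 (ht _), Finset.sum_mul, mul_assoc]

lemma abs_empiricalEta_le (hx : ∀ j, 0 ≤ x j) {t : ℝ} (ht : 0 ≤ t) :
    |empiricalEta x c t| ≤ (n : ℝ)⁻¹ * ∑ j, (|c j| * x j + 1) := by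
  have hsum : empiricalEta x c t =
      -((n : ℝ)⁻¹ * ∑ j, (c j * min (x j) t + if x j ≤ t then 1 else 0)) := by
    simp only [empiricalEta, Finset.sum_add_distrib]
    ring
  rw [hsum, abs_neg, abs_mul, abs_of_nonneg (by positivity)]
  gcongr
  refine (Finset.abs_sum_le_sum_abs _ _).trans (Finset.sum_le_sum fun j _ => ?_)
  refine (abs_add_le _ _).trans (add_le_add ?_ ?_)
  · rw [abs_mul, abs_of_nonneg (le_min (hx j) ht)]
    gcongr
    exact min_le_left _ _
  · split_ifs <;> simp

end EmpiricalEta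

theorem stmt9_general (q : ℝ) (hq : 1 ≤ q) (n : ℕ)
    (x c : Fin n → ℝ) (hx : ∀ j, 0 < x j) :
    Tendsto
      (fun a : ℝ => a ^ (q + 1) *
        ∫ t in Ioi (0 : ℝ),
          |-((n : ℝ)⁻¹ * ∑ j, c j * min (x j) t)
            - (n : ℝ)⁻¹ * ∑ j, (if x j ≤ t then (1 : ℝ) else 0)| ^ q
          * Real.exp (-a * t))
      atTop
      (nhds (Real.Gamma (q + 1) * |(n : ℝ)⁻¹ * ∑ j, c j| ^ q)) := by
  set m := (n : ℝ)⁻¹ * ∑ j, c j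
  have hnear : (fun t => |empiricalEta x c t| ^ q) =ᶠ[𝓝[>] 0] fun t => |m| ^ q * t ^ q := by
    filter_upwards [empiricalEta_eventuallyEq x c hx, self_mem_nhdsWithin] with t ht (ht0 : 0 < t)
    rw [ht, abs_mul, abs_neg, abs_of_pos ht0, mul_rpow (abs_nonneg _) ht0.le]
  have hint : IntegrableOn (fun t => |empiricalEta x c t| ^ q * exp (-t)) (Ioi 0) := by
    refine Integrable.bdd_mul (c := ((n : ℝ)⁻¹ * ∑ j, (|c j| * x j + 1)) ^ q)
      ((exp_neg_integrableOn_Ioi 0 one_pos).congr_fun (fun t _ => by simp) measurableSet_Ioi)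
      ((measurable_empiricalEta x c).abs.pow_const q).aestronglyMeasurable ?_
    filter_upwards [ae_restrict_mem measurableSet_Ioi] with t (ht : 0 < t)
    rw [norm_of_nonneg (by positivity)]
    exact rpow_le_rpow (abs_nonneg _) (abs_empiricalEta_le x c (fun j => (hx j).le) ht.le)
      (by linarith)
  exact tendsto_rpow_mul_integral_mul_exp_neg_mul_of_eventuallyEq_rpow (by linarith) hint hnear

/-- The case `a → ∞`, deterministic core: for
`ηₙ(t) = −(1/n)Σⱼ cⱼ min{xⱼ,t} − (1/n)Σⱼ 1{xⱼ ≤ t}` with `xⱼ > 0`, one has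
`lim_{a→∞} a^{q+1} ∫₀^∞ |ηₙ(t)|^q e^{−a t} dt = Γ(q+1)·|(1/n) Σⱼ cⱼ|^q`. -/
theorem stmt9 (q : ℝ) (hq : 1 ≤ q) (n : ℕ) (hn : 0 < n)
    (x c : Fin n → ℝ) (hx : ∀ j, 0 < x j) :
    Tendsto
      (fun a : ℝ => a ^ (q + 1) *
        ∫ t in Ioi (0 : ℝ),
          |-((n : ℝ)⁻¹ * ∑ j, c j * min (x j) t)
            - (n : ℝ)⁻¹ * ∑ j, (if x j ≤ t then (1 : ℝ) else 0)| ^ q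
          * Real.exp (-a * t))
      atTop
      (nhds (Real.Gamma (q + 1) * |(n : ℝ)⁻¹ * ∑ j, c j| ^ q)) :=
  stmt9_general q hq n x c hx
end

section
/- Let X be a positive random variable with E|X·p'_θ(X)/p_θ(X)| < ∞ for θ in a compact set K ⊆ ℝ^d, where the map θ ↦ p'_θ(x)/p_θ(x) is continuous for every x > 0 and satisfies the Hölder condition (R3). Then the class of functions ℋ = { x ↦ (p'_θ(x)/p_θ(x))·min{x,t} : θ ∈ K, t > 0 } has finite L¹-bracketing numbers: for every ε > 0 there exist finitely many ε-brackets with respect to L¹(P^X) covering ℋ. -/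
open MeasureTheory Set Filter Topology

-- integrability helper
lemma aux_int {Ω : Type*} [MeasurableSpace Ω] (P : Measure Ω)
    (X : Ω → ℝ) (hXmeas : Measurable X) (hXpos : ∀ᵐ ω ∂P, 0 < X ω)
    (c : ℝ → ℝ) (hc : Measurable c)
    (hint : Integrable (fun ω => X ω * c (X ω)) P)
    (φ : ℝ → ℝ) (hφ : Measurable φ) (hφ_bd : ∀ x, 0 < x → |φ x| ≤ x) :
    Integrable (fun ω => |c (X ω)| * φ (X ω)) P := by
  apply Integrable.mono' hint.abs
  · exact ((hc.comp hXmeas).abs.mul (hφ.comp hXmeas)).aestronglyMeasurable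
  · filter_upwards [hXpos] with ω hω
    have := hφ_bd (X ω) hω
    rw [Real.norm_eq_abs, abs_mul, abs_abs, abs_mul]
    have : |c (X ω)| * |φ (X ω)| ≤ |c (X ω)| * |X ω| := by
      apply mul_le_mul_of_nonneg_left _ (abs_nonneg _)
      calc |φ (X ω)| ≤ X ω := hφ_bd (X ω) hω
        _ ≤ |X ω| := le_abs_self _
    linarith [this, mul_comm |X ω| |c (X ω)|]

lemma aux_h {Ω : Type*} [MeasurableSpace Ω] (P : Measure Ω) [IsProbabilityMeasure P]
    (X : Ω → ℝ) (hXmeas : Measurable X) (hXpos : ∀ᵐ ω ∂P, 0 < X ω)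
    (c : ℝ → ℝ) (hc : Measurable c)
    (hint : Integrable (fun ω => X ω * c (X ω)) P)
    (ε : ℝ) (hε : 0 < ε) :
    ∃ n₀ : ℕ, ∀ n ≥ n₀, ∫ ω, |c (X ω)| * min (X ω) (1/(n+1 : ℝ)) ∂P < ε := by
  have key : Tendsto (fun n : ℕ => ∫ ω, |c (X ω)| * min (X ω) (1/(n+1 : ℝ)) ∂P)
      atTop (𝓝 (∫ _ω, (0:ℝ) ∂P)) := by
    apply tendsto_integral_of_dominated_convergence (fun ω => |X ω * c (X ω)|)
    · intro n
      exact ((hc.comp hXmeas).abs.mul ((hXmeas.min measurable_const))).aestronglyMeasurable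
    · exact hint.abs
    · intro n
      filter_upwards [hXpos] with ω hω
      rw [Real.norm_eq_abs, abs_mul, abs_abs, abs_mul]
      have h1 : |min (X ω) (1/(n+1:ℝ))| ≤ |X ω| := by
        rw [abs_of_pos hω, abs_of_pos (lt_min hω (by positivity))]
        exact min_le_left _ _
      calc |c (X ω)| * |min (X ω) (1/(n+1:ℝ))| ≤ |c (X ω)| * |X ω| :=
            mul_le_mul_of_nonneg_left h1 (abs_nonneg _)
        _ = |X ω| * |c (X ω)| := mul_comm _ _
    · filter_upwards [hXpos] with ω hω
      have : Tendsto (fun n : ℕ => (1/(n+1:ℝ))) atTop (𝓝 0) :=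
        tendsto_one_div_add_atTop_nhds_zero_nat
      have h2 : Tendsto (fun n : ℕ => |c (X ω)| * (1/(n+1:ℝ))) atTop (𝓝 0) := by
        simpa using this.const_mul |c (X ω)|
      apply squeeze_zero (fun n => by positivity) (fun n => ?_) h2
      exact mul_le_mul_of_nonneg_left (min_le_right _ _) (abs_nonneg _)
  rw [integral_zero] at key
  have := key.eventually_lt_const hε
  rw [eventually_atTop] at this
  exact this

lemma aux_tail {Ω : Type*} [MeasurableSpace Ω] (P : Measure Ω) [IsProbabilityMeasure P]
    (X : Ω → ℝ) (hXmeas : Measurable X) (hXpos : ∀ᵐ ω ∂P, 0 < X ω)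
    (c : ℝ → ℝ) (hc : Measurable c)
    (hint : Integrable (fun ω => X ω * c (X ω)) P)
    (ε : ℝ) (hε : 0 < ε) :
    ∃ n₀ : ℕ, ∀ n ≥ n₀, ∫ ω, |c (X ω)| * (X ω - min (X ω) (n:ℝ)) ∂P < ε := by
  have key : Tendsto (fun n : ℕ => ∫ ω, |c (X ω)| * (X ω - min (X ω) (n:ℝ)) ∂P)
      atTop (𝓝 (∫ _ω, (0:ℝ) ∂P)) := by
    apply tendsto_integral_of_dominated_convergence (fun ω => |X ω * c (X ω)|)
    · intro n
      exact ((hc.comp hXmeas).abs.mul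
        (hXmeas.sub (hXmeas.min measurable_const))).aestronglyMeasurable
    · exact hint.abs
    · intro n
      filter_upwards [hXpos] with ω hω
      rw [Real.norm_eq_abs, abs_mul, abs_abs, abs_mul]
      have h0 : (0:ℝ) ≤ min (X ω) (n:ℝ) := le_min hω.le (Nat.cast_nonneg n)
      have h1 : |X ω - min (X ω) (n:ℝ)| ≤ |X ω| := by
        rw [abs_of_nonneg (by linarith [min_le_left (X ω) (n:ℝ)]), abs_of_pos hω]
        linarith
      calc |c (X ω)| * |X ω - min (X ω) (n:ℝ)| ≤ |c (X ω)| * |X ω| :=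
            mul_le_mul_of_nonneg_left h1 (abs_nonneg _)
        _ = |X ω| * |c (X ω)| := mul_comm _ _
    · filter_upwards [hXpos] with ω hω
      have : ∀ᶠ n : ℕ in atTop, |c (X ω)| * (X ω - min (X ω) (n:ℝ)) = 0 := by
        obtain ⟨n₀, hn₀⟩ := exists_nat_ge (X ω)
        rw [eventually_atTop]
        refine ⟨n₀, fun n hn => ?_⟩
        have : min (X ω) (n:ℝ) = X ω := min_eq_left (hn₀.trans (by exact_mod_cast hn))
        rw [this]; ring
      exact Tendsto.congr' (this.mono fun n h => h.symm) tendsto_const_nhds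
  rw [integral_zero] at key
  have := key.eventually_lt_const hε
  rw [eventually_atTop] at this
  exact this


noncomputable def brkL (g H : ℝ → ℝ) (r : ℝ) (A B : ℝ → ℝ) (x : ℝ) : ℝ :=
  if x ≤ 0 then 0 else max (g x) 0 * A x - max (-(g x)) 0 * B x - r * (H x * x)

noncomputable def brkU (g H : ℝ → ℝ) (r : ℝ) (A B : ℝ → ℝ) (x : ℝ) : ℝ :=
  if x ≤ 0 then 0 else max (g x) 0 * B x - max (-(g x)) 0 * A x + r * (H x * x)

lemma brk_meas {g H A B : ℝ → ℝ} (hg : Measurable g) (hH : Measurable H)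
    (hA : Measurable A) (hB : Measurable B) (r : ℝ) :
    Measurable (brkL g H r A B) ∧ Measurable (brkU g H r A B) := by
  constructor <;>
  · apply Measurable.ite (measurableSet_le measurable_id measurable_const) measurable_const
    fun_prop

lemma brk_sandwich {g gθ H : ℝ → ℝ} {r : ℝ} {A B : ℝ → ℝ} {x t : ℝ}
    (hx : 0 < x) (ht : 0 < t) (hA : A x ≤ min x t) (hB : min x t ≤ B x)
    (hd : |gθ x - g x| ≤ H x * r) (hH : 0 ≤ H x) (hr : 0 ≤ r) :
    brkL g H r A B x ≤ gθ x * min x t ∧ gθ x * min x t ≤ brkU g H r A B x := by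
  have hxle : ¬ x ≤ 0 := not_le.mpr hx
  rw [brkL, brkU, if_neg hxle, if_neg hxle]
  set Mx := min x t with hMx
  have hM0 : 0 ≤ Mx := le_min hx.le ht.le
  have hMlex : Mx ≤ x := min_le_left _ _
  have hgp : 0 ≤ max (g x) 0 := le_max_right _ _
  have hgm : 0 ≤ max (-(g x)) 0 := le_max_right _ _
  have hpm : max (g x) 0 - max (-(g x)) 0 = g x := by
    rcases le_total (g x) 0 with h | h
    · rw [max_eq_right h, max_eq_left (by linarith)]; ring
    · rw [max_eq_left h, max_eq_right (by linarith)]; ring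
  have hd1 : -(H x * r) ≤ gθ x - g x := neg_le_of_abs_le hd
  have hd2 : gθ x - g x ≤ H x * r := le_of_abs_le hd
  have e1 : -(H x * r) * Mx ≤ (gθ x - g x) * Mx := mul_le_mul_of_nonneg_right hd1 hM0
  have e2 : (gθ x - g x) * Mx ≤ H x * r * Mx := mul_le_mul_of_nonneg_right hd2 hM0
  have e3 : H x * r * Mx ≤ H x * r * x := by
    apply mul_le_mul_of_nonneg_left hMlex (mul_nonneg hH hr)
  have p1 : 0 ≤ max (g x) 0 * (Mx - A x) := mul_nonneg hgp (by linarith)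
  have p2 : 0 ≤ max (-(g x)) 0 * (B x - Mx) := mul_nonneg hgm (by linarith)
  have p3 : 0 ≤ max (g x) 0 * (B x - Mx) := mul_nonneg hgp (by linarith)
  have p4 : 0 ≤ max (-(g x)) 0 * (Mx - A x) := mul_nonneg hgm (by linarith)
  constructor <;> nlinarith [hpm, e1, e2, e3, p1, p2, p3, p4]

lemma brk_diff {g H : ℝ → ℝ} {r : ℝ} {A B : ℝ → ℝ} {x : ℝ} (hx : 0 < x) :
    brkU g H r A B x - brkL g H r A B x = |g x| * (B x - A x) + 2 * r * (H x * x) := by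
  have hxle : ¬ x ≤ 0 := not_le.mpr hx
  rw [brkL, brkU, if_neg hxle, if_neg hxle]
  have hpm : max (g x) 0 + max (-(g x)) 0 = |g x| := by
    rcases le_total (g x) 0 with h | h
    · rw [max_eq_right h, max_eq_left (by linarith), abs_of_nonpos h]; ring
    · rw [max_eq_left h, max_eq_right (by linarith), abs_of_nonneg h]; ring
  rw [← hpm]; ring

lemma brk_diff_zero {g H : ℝ → ℝ} {r : ℝ} {A B : ℝ → ℝ} {x : ℝ} (hx : ¬ 0 < x) :
    brkU g H r A B x - brkL g H r A B x = 0 := by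
  rw [brkL, brkU, if_pos (not_lt.mp hx), if_pos (not_lt.mp hx)]; ring

lemma min_sub_min_le {x t h : ℝ} (hx : 0 < x) (ht : 0 ≤ t) (hh : 0 ≤ h) :
    min x (t + h) - min x t ≤ min x h := by
  rcases le_total x t with h1 | h1
  · rw [min_eq_left (by linarith), min_eq_left h1]
    simp [le_min hx.le hh]
  · rcases le_total x (t + h) with h2 | h2
    · rw [min_eq_left h2, min_eq_right h1]
      rcases le_total x h with h3 | h3
      · rw [min_eq_left h3]; linarith
      · rw [min_eq_right h3]; linarith
    · rw [min_eq_right h2, min_eq_right h1]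
      rcases le_total x h with h3 | h3
      · rw [min_eq_left h3]; linarith
      · rw [min_eq_right h3]; linarith


/-- Finite `L¹(P^X)`-bracketing numbers for the class
`ℋ = {x ↦ (p'_θ(x)/p_θ(x))·min{x,t} : θ ∈ K, t > 0}` (with `g θ x = p'_θ(x)/p_θ(x)`)
under continuity in `θ` and the Hölder condition (R3). -/
theorem stmt16 {d : ℕ} {Ω : Type*} [MeasurableSpace Ω]
    (P : Measure Ω) [IsProbabilityMeasure P]
    (X : Ω → ℝ) (hXmeas : Measurable X) (hXpos : ∀ᵐ ω ∂P, 0 < X ω)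
    (K : Set (EuclideanSpace ℝ (Fin d))) (hK : IsCompact K) (hKne : K.Nonempty)
    (g : EuclideanSpace ℝ (Fin d) → ℝ → ℝ)
    (hg_meas : ∀ θ ∈ K, Measurable (g θ))
    (hg_cont : ∀ x : ℝ, 0 < x → ContinuousOn (fun θ => g θ x) K)
    (hg_int : ∀ θ ∈ K, Integrable (fun ω => X ω * g θ (X ω)) P)
    (α : ℝ) (hα : 0 < α) (H : ℝ → ℝ) (hH_nonneg : ∀ x, 0 ≤ H x)
    (hH_meas : Measurable H)
    (hH_int : Integrable (fun ω => H (X ω) * X ω) P)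
    (hHolder : ∀ x : ℝ, 0 < x → ∀ θ₁ ∈ K, ∀ θ₂ ∈ K,
      |g θ₂ x - g θ₁ x| ≤ H x * ‖θ₂ - θ₁‖ ^ α) :
    ∀ ε > 0, ∃ (m : ℕ) (l u : Fin m → ℝ → ℝ),
      (∀ i, Integrable (fun ω => u i (X ω) - l i (X ω)) P ∧
        ∫ ω, |u i (X ω) - l i (X ω)| ∂P < ε) ∧
      (∀ θ ∈ K, ∀ t : ℝ, 0 < t → ∃ i : Fin m,
        ∀ x : ℝ, 0 < x → l i x ≤ g θ x * min x t ∧ g θ x * min x t ≤ u i x) := by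
  intro ε hε
  set C : ℝ := ∫ ω, H (X ω) * X ω ∂P with hC
  have hC0 : 0 ≤ C := by
    apply integral_nonneg_of_ae
    filter_upwards [hXpos] with ω hω
    exact mul_nonneg (hH_nonneg _) hω.le
  set r : ℝ := ε / (8 * (C + 1)) with hrdef
  have hr0 : 0 < r := by positivity
  set δ : ℝ := r ^ (α⁻¹ : ℝ) with hδdef
  have hδ0 : 0 < δ := Real.rpow_pos_of_pos hr0 _
  have hδα : δ ^ α = r := by
    rw [hδdef, ← Real.rpow_mul hr0.le, inv_mul_cancel₀ hα.ne', Real.rpow_one]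
  -- finite δ-net of K
  obtain ⟨s0, hs0K, hs0fin, hs0cover⟩ :=
    hK.elim_finite_subcover_image (b := K)
      (c := fun θ => Metric.ball θ δ) (fun θ _ => Metric.isOpen_ball)
      (fun θ hθ => Set.mem_biUnion hθ (Metric.mem_ball_self hδ0))
  set sF := hs0fin.toFinset with hsF
  set n := sF.card with hn
  set θf : Fin n → EuclideanSpace ℝ (Fin d) := fun i => (sF.equivFin.symm i : _) with hθf
  have hθfK : ∀ i, θf i ∈ K := fun i => hs0K (hs0fin.mem_toFinset.mp (sF.equivFin.symm i).2)
  have hcover : ∀ θ ∈ K, ∃ i : Fin n, ‖θ - θf i‖ < δ := by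
    intro θ hθ
    obtain ⟨c, hc, hmem⟩ := Set.mem_iUnion₂.mp (hs0cover hθ)
    refine ⟨sF.equivFin ⟨c, hs0fin.mem_toFinset.mpr hc⟩, ?_⟩
    rw [hθf]
    simp only [Equiv.symm_apply_apply]
    rwa [← mem_ball_iff_norm]
  -- choose the mesh h and the tail cutoff M
  choose nh hnh using fun i : Fin n => aux_h P X hXmeas hXpos (g (θf i))
    (hg_meas _ (hθfK i)) (hg_int _ (hθfK i)) (ε/4) (by linarith)
  choose nt hnt using fun i : Fin n => aux_tail P X hXmeas hXpos (g (θf i))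
    (hg_meas _ (hθfK i)) (hg_int _ (hθfK i)) (ε/4) (by linarith)
  set nmax := Finset.univ.sup nh with hnmax
  set M := Finset.univ.sup nt with hMdef
  set h : ℝ := 1/(nmax+1 : ℝ) with hhdef
  have hh0 : 0 < h := by positivity
  have hbd1 : ∀ i, ∫ ω, |g (θf i) (X ω)| * min (X ω) h ∂P < ε/4 :=
    fun i => hnh i nmax (Finset.le_sup (Finset.mem_univ i))
  have hbd2 : ∀ i, ∫ ω, |g (θf i) (X ω)| * (X ω - min (X ω) (M:ℝ)) ∂P < ε/4 :=
    fun i => hnt i M (Finset.le_sup (Finset.mem_univ i))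
  obtain ⟨N, hNge⟩ := exists_nat_ge ((M:ℝ)/h)
  have hMNh : (M:ℝ) ≤ N * h := (div_le_iff₀ hh0).mp hNge
  -- lower / upper grid functions
  set Af : Fin (N+1) → ℝ → ℝ := fun j x => min x ((j:ℕ) * h) with hAf
  set Bf : Fin (N+1) → ℝ → ℝ :=
    fun j x => if (j:ℕ) = N then x else min x (((j:ℕ) + 1) * h) with hBf
  have hAmeas : ∀ j, Measurable (Af j) := fun j => measurable_id.min measurable_const
  have hBmeas : ∀ j, Measurable (Bf j) := by
    intro j
    rw [hBf]; try dsimp only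
    split_ifs
    · exact measurable_id
    · exact measurable_id.min measurable_const
  -- Part 1: each bracket is small in L¹
  have main1 : ∀ (i : Fin n) (j : Fin (N+1)),
      Integrable (fun ω => brkU (g (θf i)) H r (Af j) (Bf j) (X ω)
        - brkL (g (θf i)) H r (Af j) (Bf j) (X ω)) P ∧
      ∫ ω, |brkU (g (θf i)) H r (Af j) (Bf j) (X ω)
        - brkL (g (θf i)) H r (Af j) (Bf j) (X ω)| ∂P < ε := by
    intro i j
    have hgi : Measurable (g (θf i)) := hg_meas _ (hθfK i)
    set φ : ℝ → ℝ :=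
      fun x => if (j:ℕ) = N then x - min x (M:ℝ) else min x h with hφ
    have hφm : Measurable φ := by
      rw [hφ]; try dsimp only
      split_ifs
      · exact measurable_id.sub (measurable_id.min measurable_const)
      · exact measurable_id.min measurable_const
    have hφbd : ∀ x, 0 < x → |φ x| ≤ x := by
      intro x hx
      rw [hφ]; try dsimp only
      split_ifs
      · have h1 : (0:ℝ) ≤ min x (M:ℝ) := le_min hx.le (Nat.cast_nonneg M)
        have h2 : min x (M:ℝ) ≤ x := min_le_left _ _
        rw [abs_of_nonneg (by linarith)]; linarith
      · have h1 : (0:ℝ) ≤ min x h := le_min hx.le hh0.le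
        rw [abs_of_nonneg h1]; exact min_le_left _ _
    have hterm1 : Integrable (fun ω => |g (θf i) (X ω)| * φ (X ω)) P :=
      aux_int P X hXmeas hXpos _ hgi (hg_int _ (hθfK i)) φ hφm hφbd
    set D : Ω → ℝ := fun ω => |g (θf i) (X ω)| * φ (X ω) + 2*r*(H (X ω) * X ω)
      with hD
    have hterm2 : Integrable (fun ω => 2*r*(H (X ω) * X ω)) P := hH_int.const_mul (2*r)
    have hDint : Integrable D P := hterm1.add hterm2
    have hae : ∀ᵐ ω ∂P, |brkU (g (θf i)) H r (Af j) (Bf j) (X ω)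
        - brkL (g (θf i)) H r (Af j) (Bf j) (X ω)| ≤ D ω := by
      filter_upwards [hXpos] with ω hω
      rw [brk_diff hω]
      have hBA0 : 0 ≤ Bf j (X ω) - Af j (X ω) := by
        rw [hBf, hAf]; try dsimp only
        split_ifs
        · have := min_le_left (X ω) (((j:ℕ):ℝ) * h); linarith
        · have : ((j:ℕ):ℝ) * h ≤ (((j:ℕ):ℝ) + 1) * h := by nlinarith [hh0]
          have := min_le_min (le_refl (X ω)) this; linarith
      have hBAle : Bf j (X ω) - Af j (X ω) ≤ φ (X ω) := by
        rw [hBf, hAf, hφ]; try dsimp only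
        split_ifs with hc
        · have hcast : ((j:ℕ):ℝ) = (N:ℝ) := by exact_mod_cast hc
          rw [hcast]
          have : min (X ω) (M:ℝ) ≤ min (X ω) ((N:ℝ) * h) :=
            min_le_min (le_refl _) hMNh
          linarith
        · have heq : (((j:ℕ):ℝ)) * h + h = (((j:ℕ):ℝ) + 1) * h := by ring
          have := min_sub_min_le (t := ((j:ℕ):ℝ) * h) (h := h) hω
            (mul_nonneg (Nat.cast_nonneg _) hh0.le) hh0.le
          rw [heq] at this
          linarith
      have hnn : 0 ≤ |g (θf i) (X ω)| * (Bf j (X ω) - Af j (X ω))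
          + 2*r*(H (X ω) * X ω) := by
        have h1 := mul_nonneg (abs_nonneg (g (θf i) (X ω))) hBA0
        have h2 : (0:ℝ) ≤ 2*r*(H (X ω) * X ω) :=
          mul_nonneg (mul_nonneg (by norm_num : (0:ℝ) ≤ 2) hr0.le)
            (mul_nonneg (hH_nonneg (X ω)) hω.le)
        linarith
      rw [abs_of_nonneg hnn]
      simp only [hD]
      have := mul_le_mul_of_nonneg_left hBAle (abs_nonneg (g (θf i) (X ω)))
      linarith
    have hmeasU := (brk_meas hgi hH_meas (hAmeas j) (hBmeas j) r).2
    have hmeasL := (brk_meas hgi hH_meas (hAmeas j) (hBmeas j) r).1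
    have hint : Integrable (fun ω => brkU (g (θf i)) H r (Af j) (Bf j) (X ω)
        - brkL (g (θf i)) H r (Af j) (Bf j) (X ω)) P := by
      apply hDint.mono' ((hmeasU.sub hmeasL).comp hXmeas).aestronglyMeasurable
      filter_upwards [hae] with ω hω
      rwa [Real.norm_eq_abs]
    refine ⟨hint, ?_⟩
    have hrC : 2*r*C ≤ ε/4 := by
      have h2 : r * (8*(C+1)) = ε := by
        rw [hrdef]; field_simp
      nlinarith [mul_nonneg hr0.le hC0, hr0]
    have hφint : ∫ ω, |g (θf i) (X ω)| * φ (X ω) ∂P < ε/4 := by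
      rw [hφ]; try dsimp only
      split_ifs
      · exact hbd2 i
      · exact hbd1 i
    calc ∫ ω, |brkU (g (θf i)) H r (Af j) (Bf j) (X ω)
          - brkL (g (θf i)) H r (Af j) (Bf j) (X ω)| ∂P
        ≤ ∫ ω, D ω ∂P := integral_mono_ae hint.abs hDint hae
      _ = (∫ ω, |g (θf i) (X ω)| * φ (X ω) ∂P) + 2*r*C := by
          rw [hD]; try dsimp only
          rw [integral_add hterm1 hterm2, integral_const_mul]
      _ < ε/4 + ε/4 := by
          have := hφint
          linarith
      _ < ε := by linarith
  -- Part 2: coverage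
  have main2 : ∀ θ ∈ K, ∀ t : ℝ, 0 < t → ∃ (i : Fin n) (j : Fin (N+1)),
      ∀ x, 0 < x → brkL (g (θf i)) H r (Af j) (Bf j) x ≤ g θ x * min x t ∧
        g θ x * min x t ≤ brkU (g (θf i)) H r (Af j) (Bf j) x := by
    intro θ hθ t ht
    obtain ⟨i, hi⟩ := hcover θ hθ
    have hd : ∀ x, 0 < x → |g θ x - g (θf i) x| ≤ H x * r := by
      intro x hx
      refine (hHolder x hx (θf i) (hθfK i) θ hθ).trans ?_
      apply mul_le_mul_of_nonneg_left _ (hH_nonneg x)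
      calc ‖θ - θf i‖ ^ α ≤ δ ^ α :=
            Real.rpow_le_rpow (norm_nonneg _) hi.le hα.le
        _ = r := hδα
    by_cases hcase : (N:ℝ) * h ≤ t
    · refine ⟨i, ⟨N, Nat.lt_succ_self N⟩, fun x hx => ?_⟩
      apply brk_sandwich hx ht ?_ ?_ (hd x hx) (hH_nonneg x) hr0.le
      · rw [hAf]; try dsimp only
        exact min_le_min (le_refl x) hcase
      · rw [hBf]; try dsimp only
        rw [if_pos rfl]
        exact min_le_left _ _
    · push_neg at hcase
      have hth : 0 ≤ t/h := by positivity
      set jn := ⌊t/h⌋₊ with hjn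
      have hjN : jn < N := by
        rw [hjn, Nat.floor_lt hth, div_lt_iff₀ hh0]
        exact hcase
      refine ⟨i, ⟨jn, by omega⟩, fun x hx => ?_⟩
      apply brk_sandwich hx ht ?_ ?_ (hd x hx) (hH_nonneg x) hr0.le
      · rw [hAf]; try dsimp only
        have hjle : (jn:ℝ) * h ≤ t := by
          rw [← le_div_iff₀ hh0]; exact Nat.floor_le hth
        exact min_le_min (le_refl x) hjle
      · rw [hBf]; try dsimp only
        rw [if_neg (by omega : ¬ jn = N)]
        have h1 : t ≤ ((jn:ℝ) + 1) * h := by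
          rw [← div_le_iff₀ hh0]
          exact_mod_cast (Nat.lt_floor_add_one (t/h)).le
        exact min_le_min (le_refl x) h1
  -- assemble
  refine ⟨n * (N+1),
    fun k => brkL (g (θf (finProdFinEquiv.symm k).1)) H r
      (Af (finProdFinEquiv.symm k).2) (Bf (finProdFinEquiv.symm k).2),
    fun k => brkU (g (θf (finProdFinEquiv.symm k).1)) H r
      (Af (finProdFinEquiv.symm k).2) (Bf (finProdFinEquiv.symm k).2),
    fun k => main1 _ _, ?_⟩
  intro θ hθ t ht
  obtain ⟨i, j, hij⟩ := main2 θ hθ t ht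
  refine ⟨finProdFinEquiv (i, j), fun x hx => ?_⟩
  simpa only [Equiv.symm_apply_apply] using hij x hx
end
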